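/- arXiv:1211.0430 — 4 statements merged into one kernel-verified Lean document; each statement's English description precedes it below -/
import Mathlib

section
/- Let Ω ⊂ ℝⁿ be a bounded domain, ε > 0, α, β > 0 with α + β = 1, and T the operator of the dynamic programming principle. Define u₀ to equal inf_{Γ_ε} F on Ω and F on Γ_ε, where F : Γ_ε → ℝ is a bounded Borel function, and u_{j+1} = T u_j. Then the sequence (u_j) is pointwise nondecreasing on Ω_ε and uniformly bounded above by sup_{Γ_ε} F. -/
open MeasureTheory Metric Set Classical

def bdryStrip {n : ℕ} (Ω : Set (EuclideanSpace ℝ (Fin n))) (ε : ℝ) :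
    Set (EuclideanSpace ℝ (Fin n)) :=
  {x | x ∉ Ω ∧ Metric.infDist x Ω ≤ ε}

noncomputable def dppT {n : ℕ} (Ω : Set (EuclideanSpace ℝ (Fin n))) (ε α β : ℝ)
    (u : EuclideanSpace ℝ (Fin n) → ℝ) (x : EuclideanSpace ℝ (Fin n)) : ℝ :=
  if x ∈ Ω then
    α / 2 * sSup (u '' ball x ε) + α / 2 * sInf (u '' ball x ε) +
      β * ⨍ y in ball x ε, u y
  else u x

/-!
For `α, β ≥ 0` the operator `T` is order preserving on bounded measurable functions, since
`sup`, `inf` and the average over a ball all are, and `α + β = 1` makes it fix constants.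
At a point of `Ω`, `T u` only reads `u` on an `ε`-ball, which stays inside `Ω_ε`; so any
inequality on `Ω_ε` between two functions, or between a function and a constant, is passed
on to their images under `T`. Now `u₀ ≥ inf F` on `Ω_ε` with equality on `Ω`, hence
`u₀ = T (inf F) ≤ T u₀ = u₁` on `Ω` (and `u₀ = u₁` off `Ω`), and induction gives
`u_j ≤ u_{j+1}`. Likewise `u₀ ≤ sup F` on `Ω_ε` propagates to every `u_j`.
The iterates stay bounded and measurable (a sup over open balls is lower semicontinuous, an inf
upper semicontinuous), so the averages are genuine integrals rather than junk zeros.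
-/

theorem bddAbove_range_of_abs_le {ι : Type*} {u : ι → ℝ} {C : ℝ} (h : ∀ i, |u i| ≤ C) :
    BddAbove (range u) :=
  ⟨C, forall_mem_range.2 fun i => (abs_le.1 (h i)).2⟩

theorem bddBelow_range_of_abs_le {ι : Type*} {u : ι → ℝ} {C : ℝ} (h : ∀ i, |u i| ≤ C) :
    BddBelow (range u) :=
  ⟨-C, forall_mem_range.2 fun i => (abs_le.1 (h i)).1⟩

theorem setAverage_mono_on {α : Type*} [MeasurableSpace α] {μ : Measure α} {s : Set α}
    {f g : α → ℝ} (hf : IntegrableOn f s μ) (hg : IntegrableOn g s μ) (hs : MeasurableSet s)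
    (h : ∀ x ∈ s, f x ≤ g x) : ⨍ x in s, f x ∂μ ≤ ⨍ x in s, g x ∂μ := by
  rw [setAverage_eq, setAverage_eq, smul_eq_mul, smul_eq_mul]
  exact mul_le_mul_of_nonneg_left (setIntegral_mono_on hf hg hs h) (by positivity)

theorem integrableOn_ball_of_abs_le {X : Type*} [PseudoMetricSpace X] [ProperSpace X]
    [MeasurableSpace X] {μ : Measure X} [IsFiniteMeasureOnCompacts μ] {u : X → ℝ} {C : ℝ}
    (hu : Measurable u) (huC : ∀ y, |u y| ≤ C) (x : X) (ε : ℝ) : IntegrableOn u (ball x ε) μ :=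
  Measure.integrableOn_of_bounded measure_ball_lt_top.ne hu.aestronglyMeasurable
    (M := C) (Filter.Eventually.of_forall huC)

section BallSupInf

variable {X : Type*} [PseudoMetricSpace X] {β : Type*} [ConditionallyCompleteLinearOrder β]
  {u : X → β} {ε : ℝ}

theorem lowerSemicontinuous_sSup_image_ball (hu : BddAbove (range u)) (hε : 0 < ε) :
    LowerSemicontinuous fun x => sSup (u '' ball x ε) := by
  intro x t ht
  obtain ⟨_, ⟨y, hy, rfl⟩, hty⟩ := exists_lt_of_lt_csSup ((nonempty_ball.2 hε).image u) ht
  filter_upwards [isOpen_ball.mem_nhds (mem_ball_comm.1 hy)] with x' hx'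
  exact hty.trans_le (le_csSup (hu.mono (image_subset_range _ _)) ⟨y, mem_ball_comm.1 hx', rfl⟩)

theorem upperSemicontinuous_sInf_image_ball (hu : BddBelow (range u)) (hε : 0 < ε) :
    UpperSemicontinuous fun x => sInf (u '' ball x ε) :=
  lowerSemicontinuous_sSup_image_ball (β := βᵒᵈ) hu hε

end BallSupInf

theorem measurable_setAverage_ball {E : Type*} [NormedAddCommGroup E] [NormedSpace ℝ E]
    [FiniteDimensional ℝ E] [MeasurableSpace E] [BorelSpace E] (μ : Measure E)
    [μ.IsAddHaarMeasure] {u : E → ℝ} (hu : Measurable u) (ε : ℝ) :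
    Measurable fun x => ⨍ y in ball x ε, u y ∂μ := by
  have hind : StronglyMeasurable fun p : E × E => (ball p.1 ε).indicator u p.2 := by
    refine (Measurable.ite ?_ (hu.comp measurable_snd) measurable_const).stronglyMeasurable
    exact (isOpen_lt (continuous_snd.dist continuous_fst) continuous_const).measurableSet
  have hint : Measurable fun x => ∫ y in ball x ε, u y ∂μ := by
    simp_rw [← integral_indicator measurableSet_ball]
    exact hind.integral_prod_right'.measurable
  simp_rw [setAverage_eq, smul_eq_mul, measureReal_def, μ.addHaar_ball_center]
  exact hint.const_mul _

section DPP

variable {n : ℕ} {Ω : Set (EuclideanSpace ℝ (Fin n))} {ε α β C C' : ℝ}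
  {u v : EuclideanSpace ℝ (Fin n) → ℝ}

theorem ball_subset_union_bdryStrip {x : EuclideanSpace ℝ (Fin n)} (hx : x ∈ Ω) :
    ball x ε ⊆ Ω ∪ bdryStrip Ω ε := by
  intro y hy
  by_cases hyΩ : y ∈ Ω
  · exact Or.inl hyΩ
  · exact Or.inr ⟨hyΩ, (infDist_le_dist_of_mem hx).trans (mem_ball.1 hy).le⟩

theorem dppT_const (hε : 0 < ε) (hαβ : α + β = 1) (c : ℝ) :
    dppT Ω ε α β (fun _ => c) = fun _ => c := by
  funext x
  have hball : (ball x ε).Nonempty := nonempty_ball.2 hε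
  have havg : ⨍ _ in ball x ε, c = c :=
    setAverage_const (measure_ball_pos volume x hε).ne' measure_ball_lt_top.ne c
  simp only [dppT, hball.image_const, csSup_singleton, csInf_singleton, havg]
  split_ifs
  · linear_combination c * hαβ
  · rfl

theorem dppT_le_dppT_on {S : Set (EuclideanSpace ℝ (Fin n))}
    (hS : ∀ x ∈ Ω, ball x ε ⊆ S) (hε : 0 < ε) (hα : 0 ≤ α) (hβ : 0 ≤ β)
    (hu : Measurable u) (hv : Measurable v) (huC : ∀ y, |u y| ≤ C) (hvC : ∀ y, |v y| ≤ C')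
    (huv : ∀ y ∈ S, u y ≤ v y) : ∀ x ∈ S, dppT Ω ε α β u x ≤ dppT Ω ε α β v x := by
  intro x hx
  unfold dppT
  split_ifs with hxΩ
  · have hle : ∀ y ∈ ball x ε, u y ≤ v y := fun y hy => huv y (hS x hxΩ hy)
    have hball : (ball x ε).Nonempty := nonempty_ball.2 hε
    have hsup : sSup (u '' ball x ε) ≤ sSup (v '' ball x ε) := by
      refine csSup_le (hball.image u) ?_
      rintro _ ⟨y, hy, rfl⟩
      have hv_bdd := (bddAbove_range_of_abs_le hvC).mono (image_subset_range v (ball x ε))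
      exact (hle y hy).trans (le_csSup hv_bdd ⟨y, hy, rfl⟩)
    have hinf : sInf (u '' ball x ε) ≤ sInf (v '' ball x ε) := by
      refine le_csInf (hball.image v) ?_
      rintro _ ⟨y, hy, rfl⟩
      have hu_bdd := (bddBelow_range_of_abs_le huC).mono (image_subset_range u (ball x ε))
      exact (csInf_le hu_bdd ⟨y, hy, rfl⟩).trans (hle y hy)
    have havg : ⨍ y in ball x ε, u y ≤ ⨍ y in ball x ε, v y :=
      setAverage_mono_on (integrableOn_ball_of_abs_le hu huC x ε)
        (integrableOn_ball_of_abs_le hv hvC x ε) measurableSet_ball hle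
    gcongr
  · exact huv x hx

theorem abs_dppT_le (hε : 0 < ε) (hα : 0 ≤ α) (hβ : 0 ≤ β) (hαβ : α + β = 1)
    (hu : Measurable u) (huC : ∀ y, |u y| ≤ C) (x : EuclideanSpace ℝ (Fin n)) :
    |dppT Ω ε α β u x| ≤ C := by
  have hlower := dppT_le_dppT_on (Ω := Ω) (fun _ _ => subset_univ _) hε hα hβ measurable_const
    hu (fun _ => le_rfl) huC (fun y _ => (abs_le.1 (huC y)).1) x (mem_univ x)
  have hupper := dppT_le_dppT_on (Ω := Ω) (fun _ _ => subset_univ _) hε hα hβ hu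
    measurable_const huC (fun _ => le_rfl) (fun y _ => (abs_le.1 (huC y)).2) x (mem_univ x)
  rw [dppT_const hε hαβ] at hlower hupper
  exact abs_le.2 ⟨hlower, hupper⟩

theorem measurable_dppT (hΩ : MeasurableSet Ω) (hε : 0 < ε) (hu : Measurable u)
    (huC : ∀ y, |u y| ≤ C) : Measurable (dppT Ω ε α β u) := by
  have hsup := (lowerSemicontinuous_sSup_image_ball (bddAbove_range_of_abs_le huC) hε).measurable
  have hinf := (upperSemicontinuous_sInf_image_ball (bddBelow_range_of_abs_le huC) hε).measurable
  have havg := measurable_setAverage_ball volume hu ε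
  exact Measurable.ite hΩ
    (((hsup.const_mul _).add (hinf.const_mul _)).add (havg.const_mul _)) hu

theorem le_dppT_on_of_eq_const {S : Set (EuclideanSpace ℝ (Fin n))}
    (hS : ∀ x ∈ Ω, ball x ε ⊆ S) (hε : 0 < ε) (hα : 0 ≤ α) (hβ : 0 ≤ β) (hαβ : α + β = 1)
    (hu : Measurable u) (huC : ∀ y, |u y| ≤ C) {c : ℝ} (huΩ : ∀ x ∈ Ω, u x = c)
    (hcu : ∀ x ∈ S, c ≤ u x) : ∀ x ∈ S, u x ≤ dppT Ω ε α β u x := by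
  intro x hx
  by_cases hxΩ : x ∈ Ω
  · calc u x = dppT Ω ε α β (fun _ => c) x := by rw [dppT_const hε hαβ, huΩ x hxΩ]
      _ ≤ dppT Ω ε α β u x :=
        dppT_le_dppT_on hS hε hα hβ measurable_const hu (fun _ => le_rfl) huC hcu x hx
  · simp only [dppT, if_neg hxΩ, le_refl]

theorem dppT_seq_measurable_abs_le (hΩ : MeasurableSet Ω) (hε : 0 < ε) (hα : 0 ≤ α)
    (hβ : 0 ≤ β) (hαβ : α + β = 1) {useq : ℕ → EuclideanSpace ℝ (Fin n) → ℝ}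
    (hiter : ∀ j, useq (j + 1) = dppT Ω ε α β (useq j))
    (h0 : Measurable (useq 0)) (h0C : ∀ y, |useq 0 y| ≤ C) :
    ∀ j, Measurable (useq j) ∧ ∀ y, |useq j y| ≤ C := by
  intro j
  induction j with
  | zero => exact ⟨h0, h0C⟩
  | succ j ih =>
    rw [hiter j]
    exact ⟨measurable_dppT hΩ hε ih.1 ih.2, abs_dppT_le hε hα hβ hαβ ih.1 ih.2⟩

section Iterates

variable {S : Set (EuclideanSpace ℝ (Fin n))} {useq : ℕ → EuclideanSpace ℝ (Fin n) → ℝ}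

theorem dppT_seq_le_succ_on (hS : ∀ x ∈ Ω, ball x ε ⊆ S) (hε : 0 < ε) (hα : 0 ≤ α)
    (hβ : 0 ≤ β) (hiter : ∀ j, useq (j + 1) = dppT Ω ε α β (useq j))
    (hbdd : ∀ j, Measurable (useq j) ∧ ∀ y, |useq j y| ≤ C)
    (h01 : ∀ x ∈ S, useq 0 x ≤ useq 1 x) : ∀ j, ∀ x ∈ S, useq j x ≤ useq (j + 1) x := by
  intro j
  induction j with
  | zero => exact h01
  | succ j ih =>
    simpa only [hiter] using
      dppT_le_dppT_on hS hε hα hβ (hbdd j).1 (hbdd (j + 1)).1 (hbdd j).2 (hbdd (j + 1)).2 ih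

theorem dppT_seq_le_const_on (hS : ∀ x ∈ Ω, ball x ε ⊆ S) (hε : 0 < ε) (hα : 0 ≤ α)
    (hβ : 0 ≤ β) (hαβ : α + β = 1) (hiter : ∀ j, useq (j + 1) = dppT Ω ε α β (useq j))
    (hbdd : ∀ j, Measurable (useq j) ∧ ∀ y, |useq j y| ≤ C) {M : ℝ}
    (h0M : ∀ x ∈ S, useq 0 x ≤ M) : ∀ j, ∀ x ∈ S, useq j x ≤ M := by
  intro j
  induction j with
  | zero => exact h0M
  | succ j ih =>
    have h := dppT_le_dppT_on hS hε hα hβ (hbdd j).1 measurable_const (hbdd j).2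
      (fun _ => le_refl |M|) ih
    rwa [dppT_const hε hαβ, ← hiter] at h

end Iterates

end DPP

theorem dpp_iteration_monotone_bounded_general {n : ℕ} (Ω : Set (EuclideanSpace ℝ (Fin n)))
    (hΩo : IsOpen Ω)
    (ε α β : ℝ) (hε : 0 < ε) (hα : 0 < α) (hβ : 0 < β) (hαβ : α + β = 1)
    (F : EuclideanSpace ℝ (Fin n) → ℝ) (hF : Measurable F)
    (C : ℝ) (hFb : ∀ x, |F x| ≤ C)
    (useq : ℕ → EuclideanSpace ℝ (Fin n) → ℝ)
    (h0 : useq 0 = fun x =>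
      if x ∈ Ω then sInf (F '' bdryStrip Ω ε) else F x)
    (hiter : ∀ j, useq (j + 1) = dppT Ω ε α β (useq j)) :
    (∀ j, ∀ x ∈ Ω ∪ bdryStrip Ω ε, useq j x ≤ useq (j + 1) x) ∧
    (∀ j, ∀ x ∈ Ω ∪ bdryStrip Ω ε, useq j x ≤ sSup (F '' bdryStrip Ω ε)) := by
  set m := sInf (F '' bdryStrip Ω ε)
  set M := sSup (F '' bdryStrip Ω ε)
  have hFA : BddAbove (F '' bdryStrip Ω ε) :=
    (bddAbove_range_of_abs_le hFb).mono (image_subset_range _ _)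
  have hFB : BddBelow (F '' bdryStrip Ω ε) :=
    (bddBelow_range_of_abs_le hFb).mono (image_subset_range _ _)
  have hu0 : ∀ x, useq 0 x = if x ∈ Ω then m else F x := fun x => congrFun h0 x
  have hS : ∀ x ∈ Ω, ball x ε ⊆ Ω ∪ bdryStrip Ω ε := fun _ => ball_subset_union_bdryStrip
  have hu0Ω : ∀ x ∈ Ω, useq 0 x = m := fun x hx => by rw [hu0, if_pos hx]
  have hm_le : ∀ x ∈ Ω ∪ bdryStrip Ω ε, m ≤ useq 0 x := by
    rintro x (hxΩ | hx)
    · exact (hu0Ω x hxΩ).ge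
    · simpa only [hu0, if_neg hx.1] using csInf_le hFB (mem_image_of_mem F hx)
  have hle_M : ∀ x ∈ Ω ∪ bdryStrip Ω ε, useq 0 x ≤ M := by
    rintro x (hxΩ | hx)
    · simpa only [hu0Ω x hxΩ] using Real.sInf_le_sSup _ hFB hFA
    · simpa only [hu0, if_neg hx.1] using le_csSup hFA (mem_image_of_mem F hx)
  have hbdd := dppT_seq_measurable_abs_le (C := max |m| C) hΩo.measurableSet hε hα.le hβ.le
    hαβ hiter (h0 ▸ Measurable.ite hΩo.measurableSet measurable_const hF) (fun x => by
      rw [hu0]; split_ifs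
      exacts [le_max_left _ _, (hFb x).trans (le_max_right _ _)])
  have h01 : ∀ x ∈ Ω ∪ bdryStrip Ω ε, useq 0 x ≤ useq 1 x := by
    rw [hiter 0]
    exact le_dppT_on_of_eq_const hS hε hα.le hβ.le hαβ (hbdd 0).1 (hbdd 0).2 hu0Ω hm_le
  exact ⟨dppT_seq_le_succ_on hS hε hα.le hβ.le hiter hbdd h01,
    dppT_seq_le_const_on hS hε hα.le hβ.le hαβ hiter hbdd hle_M⟩

/-- The iteration `u_{j+1} = T u_j` started from `inf F` is pointwise nondecreasing
on Ω_ε and uniformly bounded above by `sup F`. -/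
theorem dpp_iteration_monotone_bounded {n : ℕ} (hn : 0 < n) (Ω : Set (EuclideanSpace ℝ (Fin n)))
    (hΩo : IsOpen Ω) (hΩc : IsConnected Ω) (hΩb : Bornology.IsBounded Ω)
    (ε α β : ℝ) (hε : 0 < ε) (hα : 0 < α) (hβ : 0 < β) (hαβ : α + β = 1)
    (F : EuclideanSpace ℝ (Fin n) → ℝ) (hF : Measurable F)
    (C : ℝ) (hFb : ∀ x, |F x| ≤ C)
    (useq : ℕ → EuclideanSpace ℝ (Fin n) → ℝ)
    (h0 : useq 0 = fun x =>
      if x ∈ Ω then sInf (F '' bdryStrip Ω ε) else F x)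
    (hiter : ∀ j, useq (j + 1) = dppT Ω ε α β (useq j)) :
    (∀ j, ∀ x ∈ Ω ∪ bdryStrip Ω ε, useq j x ≤ useq (j + 1) x) ∧
    (∀ j, ∀ x ∈ Ω ∪ bdryStrip Ω ε, useq j x ≤ sSup (F '' bdryStrip Ω ε)) :=
  dpp_iteration_monotone_bounded_general Ω hΩo ε α β hε hα hβ hαβ F hF C hFb useq h0 hiter
end

section
/- Let Ω ⊂ ℝⁿ be a bounded domain, ε > 0, α ≥ 0, β > 0 with α + β = 1. Suppose u and u' are bounded Borel functions on Ω_ε satisfying the dynamic programming principle u = Tu and u' = Tu', with boundary values g and g' respectively on Γ_ε. Then sup_{x ∈ Ω} (u' − u)(x) ≤ sup_{x ∈ Γ_ε} (g' − g)(x). -/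
open MeasureTheory Metric Set

/-!
Write `v = u' - u`, `M = sup_Ω v` and `K = sup_Γ (g' - g)`. Subtracting the two dynamic
programming principles gives the sub-mean-value inequality `v x ≤ α M + β ⨍_{B_ε(x)} v`
on `Ω`. If `K < M`, a point `x ∈ Ω` with `v x > M - η` has `⨍_{B_ε(x)} v > M - η / β`, so by
Chebyshev's inequality `v > M - δ` somewhere in the ball `B_{ε/4}(x + 3ε/4 e)`, as soon as
`η ≤ β 4⁻ⁿ δ`. That point advances by `ε/2` in the direction `e`, and lies in `Ω` because `v ≤ K`
on `Γ_ε`. Starting close enough to `M`, this walk can be continued for arbitrarily many steps,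
which is impossible in the bounded set `Ω`.
-/

open scoped ENNReal
open Module (finrank)

noncomputable def dppOp {X : Type*} [PseudoMetricSpace X] [MeasurableSpace X] (μ : Measure X)
    (α β ε : ℝ) (u : X → ℝ) (x : X) : ℝ :=
  α / 2 * sSup (u '' ball x ε) + α / 2 * sInf (u '' ball x ε) + β * ⨍ y in ball x ε, u y ∂μ

section Comparison

variable {X : Type*} {s : Set X} {f g : X → ℝ} {M : ℝ}

theorem csSup_image_le_csSup_image_add (hs : s.Nonempty) (hf : BddAbove (f '' s))
    (h : ∀ y ∈ s, g y - f y ≤ M) : sSup (g '' s) ≤ sSup (f '' s) + M :=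
  csSup_le (hs.image g) <| forall_mem_image.2 fun y hy => by
    linarith [h y hy, le_csSup hf (mem_image_of_mem f hy)]

theorem csInf_image_le_csInf_image_add (hs : s.Nonempty) (hg : BddBelow (g '' s))
    (h : ∀ y ∈ s, g y - f y ≤ M) : sInf (g '' s) ≤ sInf (f '' s) + M :=
  sub_le_iff_le_add.1 <| le_csInf (hs.image f) <| forall_mem_image.2 fun y hy => by
    linarith [h y hy, csInf_le hg (mem_image_of_mem g hy)]

theorem dppOp_sub_dppOp_le [PseudoMetricSpace X] [MeasurableSpace X] (μ : Measure X)
    {α β ε : ℝ} {u u' : X → ℝ} {x : X} (hα : 0 ≤ α) (hx : (ball x ε).Nonempty)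
    (hu : BddAbove (u '' ball x ε)) (hu' : BddBelow (u' '' ball x ε))
    (hui : IntegrableOn u (ball x ε) μ) (hu'i : IntegrableOn u' (ball x ε) μ)
    (hM : ∀ y ∈ ball x ε, u' y - u y ≤ M) :
    dppOp μ α β ε u' x - dppOp μ α β ε u x ≤
      α * M + β * ⨍ y in ball x ε, (u' y - u y) ∂μ := by
  have hsup := mul_le_mul_of_nonneg_left
    (csSup_image_le_csSup_image_add hx hu hM) (div_nonneg hα zero_le_two)
  have hinf := mul_le_mul_of_nonneg_left
    (csInf_image_le_csInf_image_add hx hu' hM) (div_nonneg hα zero_le_two)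
  have havg : ⨍ y in ball x ε, (u' y - u y) ∂μ =
      (⨍ y in ball x ε, u' y ∂μ) - ⨍ y in ball x ε, u y ∂μ := by
    simp only [setAverage_eq, integral_sub hu'i hui, smul_sub]
  rw [dppOp, dppOp, havg]
  linarith

end Comparison

theorem exists_mem_sub_lt_of_setAverage {X : Type*} [MeasurableSpace X] {μ : Measure X}
    {s t : Set X} {v : X → ℝ} {M δ : ℝ} (hs : MeasurableSet s) (hμs : μ s ≠ ∞)
    (ht : MeasurableSet t) (hts : t ⊆ s) (hv : IntegrableOn v s μ) (hvM : ∀ y ∈ s, v y ≤ M)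
    (h : (M - ⨍ y in s, v y ∂μ) * μ.real s < δ * μ.real t) :
    ∃ y ∈ t, M - δ < v y := by
  by_contra! hle
  have hMi : IntegrableOn (fun _ => M) s μ := integrableOn_const hμs
  have hMv : IntegrableOn (fun y => M - v y) s μ := hMi.sub hv
  refine h.not_ge ?_
  calc δ * μ.real t = ∫ _ in t, δ ∂μ := by rw [setIntegral_const, smul_eq_mul, mul_comm]
    _ ≤ ∫ y in t, (M - v y) ∂μ :=
        setIntegral_mono_on (integrableOn_const ((measure_mono hts).trans_lt hμs.lt_top).ne)
          (hMv.mono_set hts) ht fun y hy => by linarith [hle y hy]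
    _ ≤ ∫ y in s, (M - v y) ∂μ :=
        setIntegral_mono_set hMv (ae_restrict_of_forall_mem hs fun y hy => sub_nonneg.2 (hvM y hy))
          hts.eventuallyLE
    _ = (M - ⨍ y in s, v y ∂μ) * μ.real s := by
        rw [integral_sub hMi hv, setIntegral_const,
          ← measure_smul_setAverage _ hμs, smul_eq_mul, smul_eq_mul]
        ring

theorem addHaar_real_ball_mul_of_pos {E : Type*} [NormedAddCommGroup E] [NormedSpace ℝ E]
    [MeasurableSpace E] [BorelSpace E] [FiniteDimensional ℝ E] (μ : Measure E)
    [μ.IsAddHaarMeasure] (x c : E) {a : ℝ} (ha : 0 < a) (r : ℝ) :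
    μ.real (ball c (a * r)) = a ^ finrank ℝ E * μ.real (ball x r) := by
  rw [measureReal_def, Measure.addHaar_ball_mul_of_pos μ c ha, ← Measure.addHaar_ball_center μ x r,
    ENNReal.toReal_mul, ENNReal.toReal_ofReal (by positivity), measureReal_def]

theorem ContinuousLinearMap.sub_lt_apply_of_mem_ball {E : Type*} [SeminormedAddCommGroup E]
    [NormedSpace ℝ E] {ℓ : E →L[ℝ] ℝ} (hℓ : ‖ℓ‖ ≤ 1) {c y : E} {r : ℝ} (hy : y ∈ ball c r) :
    ℓ c - r < ℓ y := by
  have h : ℓ c - ℓ y ≤ dist c y := calc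
    ℓ c - ℓ y ≤ ‖ℓ (c - y)‖ := by rw [map_sub]; exact le_abs_self _
    _ ≤ ‖ℓ‖ * ‖c - y‖ := ℓ.le_opNorm _
    _ ≤ dist c y := by rw [dist_eq_norm]; exact mul_le_of_le_one_left (norm_nonneg _) hℓ
  linarith [mem_ball'.1 hy]

section StrictMaximumPrinciple

variable {E : Type*} [NormedAddCommGroup E] [NormedSpace ℝ E] [MeasurableSpace E] [BorelSpace E]
  [FiniteDimensional ℝ E] {μ : Measure E} [μ.IsAddHaarMeasure]
  {Ω : Set E} {ε β M K : ℝ} {v : E → ℝ}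

theorem exists_mem_sub_lt_of_subDPP (hε : 0 < ε) (hβ : 0 < β)
    (hvM : ∀ x ∈ Ω, ∀ y ∈ ball x ε, v y ≤ M) (hvK : ∀ x ∈ Ω, ∀ y ∈ ball x ε \ Ω, v y ≤ K)
    (hv : ∀ x ∈ Ω, IntegrableOn v (ball x ε) μ)
    (hsub : ∀ x ∈ Ω, v x ≤ (1 - β) * M + β * ⨍ y in ball x ε, v y ∂μ)
    {ℓ : E →L[ℝ] ℝ} (hℓ : ‖ℓ‖ ≤ 1) {e : E} (he : ‖e‖ = 1) (hℓe : ℓ e = 1)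
    {δ : ℝ} (hδK : δ ≤ M - K) {x : E} (hx : x ∈ Ω)
    (hvx : M - β * 4⁻¹ ^ finrank ℝ E * δ < v x) :
    ∃ y ∈ Ω, M - δ < v y ∧ ℓ x + ε / 2 ≤ ℓ y := by
  set c := x + (3 * ε / 4) • e
  have hcx : ball c (4⁻¹ * ε) ⊆ ball x ε := ball_subset_ball' <| by
    rw [dist_self_add_left, norm_smul, he, Real.norm_of_nonneg (by positivity)]
    linarith
  have hℓc : ℓ c = ℓ x + 3 * ε / 4 := by simp [c, hℓe]
  have hμB : 0 < μ.real (ball x ε) := ENNReal.toReal_pos (measure_ball_pos μ x hε).ne'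
    measure_ball_lt_top.ne
  have hgap : M - ⨍ y in ball x ε, v y ∂μ < 4⁻¹ ^ finrank ℝ E * δ := by
    have := hsub x hx
    refine lt_of_mul_lt_mul_left ?_ hβ.le
    linarith
  obtain ⟨y, hyc, hvy⟩ := exists_mem_sub_lt_of_setAverage measurableSet_ball
    measure_ball_lt_top.ne measurableSet_ball hcx (hv x hx) (hvM x hx) <|
      (mul_lt_mul_of_pos_right hgap hμB).trans_eq <| by
        rw [addHaar_real_ball_mul_of_pos μ x c (by norm_num)]
        ring
  have hyΩ : y ∈ Ω := by
    by_contra hyΩ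
    linarith [hvK x hx y ⟨hcx hyc, hyΩ⟩]
  refine ⟨y, hyΩ, hvy, ?_⟩
  linarith [ℓ.sub_lt_apply_of_mem_ball hℓ hyc]

theorem apply_add_le_of_subDPP (hε : 0 < ε) (hβ : 0 < β) (hβ1 : β ≤ 1) (hKM : K ≤ M)
    (hvM : ∀ x ∈ Ω, ∀ y ∈ ball x ε, v y ≤ M) (hvK : ∀ x ∈ Ω, ∀ y ∈ ball x ε \ Ω, v y ≤ K)
    (hv : ∀ x ∈ Ω, IntegrableOn v (ball x ε) μ)
    (hsub : ∀ x ∈ Ω, v x ≤ (1 - β) * M + β * ⨍ y in ball x ε, v y ∂μ)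
    {ℓ : E →L[ℝ] ℝ} (hℓ : ‖ℓ‖ ≤ 1) {e : E} (he : ‖e‖ = 1) (hℓe : ℓ e = 1)
    {R : ℝ} (hR : ∀ x ∈ Ω, ℓ x ≤ R) (k : ℕ) {x : E} (hx : x ∈ Ω)
    (hvx : M - (M - K) * (β * 4⁻¹ ^ finrank ℝ E) ^ k < v x) :
    ℓ x + k * (ε / 2) ≤ R := by
  induction k generalizing x with
  | zero => simpa using hR x hx
  | succ k ih =>
    have hq : β * 4⁻¹ ^ finrank ℝ E ≤ 1 :=
      mul_le_one₀ hβ1 (by positivity) (pow_le_one₀ (by norm_num) (by norm_num))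
    obtain ⟨y, hy, hvy, hℓy⟩ := exists_mem_sub_lt_of_subDPP (μ := μ) hε hβ hvM hvK hv hsub
      hℓ he hℓe (δ := (M - K) * (β * 4⁻¹ ^ finrank ℝ E) ^ k)
      (mul_le_of_le_one_right (by linarith) (pow_le_one₀ (by positivity) hq)) hx
      (by rw [pow_succ] at hvx; linarith)
    push_cast
    linarith [ih hy hvy]

theorem exists_forall_le_sub_of_subDPP [Nontrivial E] (hΩ : Bornology.IsBounded Ω)
    (hε : 0 < ε) (hβ : 0 < β) (hβ1 : β ≤ 1) (hKM : K < M)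
    (hvM : ∀ x ∈ Ω, ∀ y ∈ ball x ε, v y ≤ M) (hvK : ∀ x ∈ Ω, ∀ y ∈ ball x ε \ Ω, v y ≤ K)
    (hv : ∀ x ∈ Ω, IntegrableOn v (ball x ε) μ)
    (hsub : ∀ x ∈ Ω, v x ≤ (1 - β) * M + β * ⨍ y in ball x ε, v y ∂μ) :
    ∃ η > 0, ∀ x ∈ Ω, v x ≤ M - η := by
  obtain ⟨e, he⟩ := exists_norm_eq E zero_le_one
  obtain ⟨ℓ, hℓ, hℓe⟩ := exists_dual_vector ℝ e (by rw [he]; exact one_ne_zero)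
  obtain ⟨R, hR⟩ := (ℓ.lipschitz.isBounded_image hΩ).exists_norm_le
  have hRΩ (x : E) (hx : x ∈ Ω) : |ℓ x| ≤ R := hR _ (mem_image_of_mem ℓ hx)
  obtain ⟨k, hk⟩ := exists_nat_gt (4 * R / ε)
  refine ⟨(M - K) * (β * 4⁻¹ ^ finrank ℝ E) ^ k, by positivity, fun x hx => ?_⟩
  by_contra! hvx
  have := apply_add_le_of_subDPP hε hβ hβ1 hKM.le hvM hvK hv hsub hℓ.le he
    (by rw [hℓe, he, RCLike.ofReal_one]) (fun y hy => (abs_le.1 (hRΩ y hy)).2) k hx hvx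
  rw [div_lt_iff₀ hε] at hk
  linarith [(abs_le.1 (hRΩ x hx)).1]

end StrictMaximumPrinciple

theorem ball_diff_subset_bdryStrip {n : ℕ} {Ω : Set (EuclideanSpace ℝ (Fin n))} {ε : ℝ}
    {x : EuclideanSpace ℝ (Fin n)} (hx : x ∈ Ω) : ball x ε \ Ω ⊆ bdryStrip Ω ε :=
  fun _ ⟨hy, hyΩ⟩ => ⟨hyΩ, (infDist_le_dist_of_mem hx).trans (mem_ball.1 hy).le⟩

theorem bddAbove_image_of_abs_le {X : Type*} {f : X → ℝ} {C : ℝ} (hf : ∀ x, |f x| ≤ C)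
    (s : Set X) : BddAbove (f '' s) :=
  ⟨C, forall_mem_image.2 fun x _ => (abs_le.1 (hf x)).2⟩

theorem bddBelow_image_of_abs_le {X : Type*} {f : X → ℝ} {C : ℝ} (hf : ∀ x, |f x| ≤ C)
    (s : Set X) : BddBelow (f '' s) :=
  ⟨-C, forall_mem_image.2 fun x _ => (abs_le.1 (hf x)).1⟩

theorem integrableOn_of_abs_le {X : Type*} [MeasurableSpace X] {μ : Measure X} {s : Set X}
    (hs : μ s ≠ ∞) {f : X → ℝ} {C : ℝ} (hf : Measurable f) (hC : ∀ x, |f x| ≤ C) :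
    IntegrableOn f s μ :=
  Measure.integrableOn_of_bounded hs hf.aestronglyMeasurable (ae_of_all _ hC)

theorem dpp_comparison_one_sided_general {n : ℕ} (hn : 0 < n) (Ω : Set (EuclideanSpace ℝ (Fin n)))
    (hΩc : IsConnected Ω) (hΩb : Bornology.IsBounded Ω)
    (ε α β : ℝ) (hε : 0 < ε) (hα : 0 ≤ α) (hβ : 0 < β) (hαβ : α + β = 1)
    (u u' g g' : EuclideanSpace ℝ (Fin n) → ℝ)
    (hu : Measurable u) (hu' : Measurable u')
    (Cu : ℝ) (hub : ∀ x, |u x| ≤ Cu) (Cu' : ℝ) (hu'b : ∀ x, |u' x| ≤ Cu')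
    (hudpp : ∀ x ∈ Ω, u x =
      α / 2 * sSup (u '' ball x ε) + α / 2 * sInf (u '' ball x ε) +
        β * ⨍ y in ball x ε, u y)
    (hu'dpp : ∀ x ∈ Ω, u' x =
      α / 2 * sSup (u' '' ball x ε) + α / 2 * sInf (u' '' ball x ε) +
        β * ⨍ y in ball x ε, u' y)
    (hbg : ∀ x ∈ bdryStrip Ω ε, u x = g x)
    (hbg' : ∀ x ∈ bdryStrip Ω ε, u' x = g' x) :
    sSup ((fun x => u' x - u x) '' Ω) ≤
      sSup ((fun x => g' x - g x) '' bdryStrip Ω ε) := by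
  have : Nonempty (Fin n) := ⟨⟨0, hn⟩⟩
  obtain rfl : α = 1 - β := by linarith
  have hvb (x : EuclideanSpace ℝ (Fin n)) : |u' x - u x| ≤ Cu' + Cu :=
    (abs_sub _ _).trans (add_le_add (hu'b x) (hub x))
  set M := sSup ((fun x => u' x - u x) '' Ω)
  set K := sSup ((fun x => g' x - g x) '' bdryStrip Ω ε)
  have hvK (y) (hy : y ∈ bdryStrip Ω ε) : u' y - u y ≤ K := by
    have hbdd : BddAbove ((fun x => g' x - g x) '' bdryStrip Ω ε) :=
      ⟨Cu' + Cu, forall_mem_image.2 fun z hz => by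
        rw [← hbg z hz, ← hbg' z hz]; exact (abs_le.1 (hvb z)).2⟩
    rw [hbg y hy, hbg' y hy]
    exact le_csSup hbdd (mem_image_of_mem _ hy)
  by_contra! hKM
  have hvM (x) (hx : x ∈ Ω) (y) (hy : y ∈ ball x ε) : u' y - u y ≤ M := by
    by_cases hyΩ : y ∈ Ω
    · exact le_csSup (bddAbove_image_of_abs_le hvb Ω) (mem_image_of_mem _ hyΩ)
    · exact (hvK y (ball_diff_subset_bdryStrip hx ⟨hy, hyΩ⟩)).trans hKM.le
  obtain ⟨η, hη, hle⟩ := exists_forall_le_sub_of_subDPP (μ := volume)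
    (v := fun x => u' x - u x) hΩb hε hβ (by linarith) hKM hvM
    (fun x hx y hy => hvK y (ball_diff_subset_bdryStrip hx hy))
    (fun _ _ => (integrableOn_of_abs_le measure_ball_lt_top.ne hu' hu'b).sub
      (integrableOn_of_abs_le measure_ball_lt_top.ne hu hub)) fun x hx => by
      rw [hu'dpp x hx, hudpp x hx]
      exact dppOp_sub_dppOp_le volume hα (nonempty_ball.2 hε) (bddAbove_image_of_abs_le hub _)
        (bddBelow_image_of_abs_le hu'b _) (integrableOn_of_abs_le measure_ball_lt_top.ne hu hub)
        (integrableOn_of_abs_le measure_ball_lt_top.ne hu' hu'b) (hvM x hx)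
  obtain ⟨_, ⟨x, hx, rfl⟩, hlt⟩ := exists_lt_of_lt_csSup (hΩc.nonempty.image _) (sub_lt_self M hη)
  linarith [hle x hx]

/-- One-sided comparison for p-harmonious functions:
`sup_Ω (u' − u) ≤ sup_{Γ_ε} (g' − g)`. -/
theorem dpp_comparison_one_sided {n : ℕ} (hn : 0 < n) (Ω : Set (EuclideanSpace ℝ (Fin n)))
    (hΩo : IsOpen Ω) (hΩc : IsConnected Ω) (hΩb : Bornology.IsBounded Ω)
    (ε α β : ℝ) (hε : 0 < ε) (hα : 0 ≤ α) (hβ : 0 < β) (hαβ : α + β = 1)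
    (u u' g g' : EuclideanSpace ℝ (Fin n) → ℝ)
    (hu : Measurable u) (hu' : Measurable u')
    (Cu : ℝ) (hub : ∀ x, |u x| ≤ Cu) (Cu' : ℝ) (hu'b : ∀ x, |u' x| ≤ Cu')
    (hudpp : ∀ x ∈ Ω, u x =
      α / 2 * sSup (u '' ball x ε) + α / 2 * sInf (u '' ball x ε) +
        β * ⨍ y in ball x ε, u y)
    (hu'dpp : ∀ x ∈ Ω, u' x =
      α / 2 * sSup (u' '' ball x ε) + α / 2 * sInf (u' '' ball x ε) +
        β * ⨍ y in ball x ε, u' y)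
    (hbg : ∀ x ∈ bdryStrip Ω ε, u x = g x)
    (hbg' : ∀ x ∈ bdryStrip Ω ε, u' x = g' x) :
    sSup ((fun x => u' x - u x) '' Ω) ≤
      sSup ((fun x => g' x - g x) '' bdryStrip Ω ε) :=
  dpp_comparison_one_sided_general hn Ω hΩc hΩb ε α β hε hα hβ hαβ u u' g g' hu hu' Cu hub Cu' hu'b
    hudpp hu'dpp hbg hbg'
end

section
/- Let u : Ω_ε → ℝ be a bounded Borel function on Ω_ε ⊂ ℝⁿ, and let δ > 0. Then there exists a Borel measurable function S_sup : Ω → Ω_ε such that S_sup(x) ∈ B_ε(x) and u(S_sup(x)) ≥ sup_{B_ε(x)} u − δ for all x ∈ Ω. Similarly there exists Borel S_inf : Ω → Ω_ε with S_inf(x) ∈ B_ε(x) and u(S_inf(x)) ≤ inf_{B_ε(x)} u + δ. -/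
open MeasureTheory Metric Set

/-- Auxiliary: there is a Borel selection almost maximizing a bounded Borel function
over `ε`-balls, for every point of the space. -/
lemma exists_sup_selection {n : ℕ} (ε : ℝ) (hε : 0 < ε)
    (u : EuclideanSpace ℝ (Fin n) → ℝ) (hu : Measurable u)
    (C : ℝ) (hub : ∀ x, |u x| ≤ C) (δ : ℝ) (hδ : 0 < δ) :
    ∃ S : EuclideanSpace ℝ (Fin n) → EuclideanSpace ℝ (Fin n),
      Measurable S ∧ ∀ x, S x ∈ ball x ε ∧
        sSup (u '' ball x ε) - δ ≤ u (S x) := by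
  classical
  have hbdd : ∀ x : EuclideanSpace ℝ (Fin n), BddAbove (u '' ball x ε) := fun x =>
    ⟨C, by rintro _ ⟨z, _, rfl⟩; exact (abs_le.1 (hub z)).2⟩
  have hne : ∀ x : EuclideanSpace ℝ (Fin n), (u '' ball x ε).Nonempty := fun x =>
    ⟨u x, mem_image_of_mem _ (mem_ball_self hε)⟩
  set M : EuclideanSpace ℝ (Fin n) → ℝ := fun x => sSup (u '' ball x ε) with hMdef
  -- M is lower semicontinuous, hence measurable
  have hlsc : LowerSemicontinuous M := by
    intro x t ht
    obtain ⟨_, ⟨z, hz, rfl⟩, htz⟩ := exists_lt_of_lt_csSup (hne x) ht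
    have hzx : dist z x < ε := mem_ball.1 hz
    have hpos : 0 < ε - dist z x := by linarith
    filter_upwards [Metric.ball_mem_nhds x hpos] with x' hx'
    have hzx' : z ∈ ball x' ε := by
      rw [mem_ball] at hx' ⊢
      have h1 : dist z x' ≤ dist z x + dist x x' := dist_triangle _ _ _
      have h2 : dist x x' = dist x' x := dist_comm _ _
      linarith
    exact lt_of_lt_of_le htz (le_csSup (hbdd x') (mem_image_of_mem _ hzx'))
  have hMm : Measurable M := hlsc.measurable
  have hδ2 : (0 : ℝ) < δ / 2 := by linarith
  set φ : EuclideanSpace ℝ (Fin n) → ℤ := fun x => ⌊M x / (δ / 2)⌋ with hφdef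
  have hφ : Measurable φ := (hMm.div_const _).floor
  set U : ℤ → Set (EuclideanSpace ℝ (Fin n)) := fun k => {y | (k : ℝ) * (δ / 2) - δ / 2 < u y} with hUdef
  -- countable dense sequences in each U k
  have hdex : ∀ k : ℤ, ∃ f : ℕ → EuclideanSpace ℝ (Fin n),
      (U k).Nonempty → (∀ m, f m ∈ U k) ∧ U k ⊆ closure (Set.range f) := by
    intro k
    rcases (U k).eq_empty_or_nonempty with h | h
    · exact ⟨fun _ => 0, fun hne' => by simp [h] at hne'⟩
    · obtain ⟨t, hts, htc, htd⟩ :=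
        (TopologicalSpace.IsSeparable.of_separableSpace (U k)).exists_countable_dense_subset
      have htne : t.Nonempty := by
        rcases h with ⟨y, hy⟩
        by_contra hcon
        rw [Set.not_nonempty_iff_eq_empty] at hcon
        have := htd hy
        simp [hcon] at this
      obtain ⟨f, rfl⟩ := htc.exists_eq_range htne
      exact ⟨f, fun _ => ⟨fun m => hts (Set.mem_range_self m), htd⟩⟩
  choose d hd using hdex
  set N : EuclideanSpace ℝ (Fin n) → ℕ := fun x => sInf {m | d (φ x) m ∈ ball x ε} with hNdef
  refine ⟨fun x => d (φ x) (N x), ?_, ?_⟩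
  · -- measurability
    have hN : Measurable N := by
      apply measurable_to_countable'
      intro m
      have hNeq : N ⁻¹' {m} =
          ⋃ k : ℤ, (φ ⁻¹' {k}) ∩ {x | sInf {j | d k j ∈ ball x ε} = m} := by
        ext x
        simp only [Set.mem_preimage, Set.mem_singleton_iff, Set.mem_iUnion,
          Set.mem_inter_iff, Set.mem_setOf_eq]
        constructor
        · intro h; exact ⟨φ x, rfl, h⟩
        · rintro ⟨k, hk, h⟩
          simp only [hNdef, hk]
          exact h
      rw [hNeq]
      refine MeasurableSet.iUnion fun k => (hφ (measurableSet_singleton k)).inter ?_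
      have hCeq : {x : EuclideanSpace ℝ (Fin n) | sInf {j | d k j ∈ ball x ε} = m} =
          (ball (d k m) ε ∩ ⋂ j, ⋂ _ : j < m, (ball (d k j) ε)ᶜ) ∪
            (if m = 0 then ⋂ j, (ball (d k j) ε)ᶜ else ∅) := by
        ext x
        simp only [Set.mem_setOf_eq, Set.mem_union, Set.mem_inter_iff, Set.mem_iInter,
          Set.mem_compl_iff]
        have hmem : ∀ j, d k j ∈ ball x ε ↔ x ∈ ball (d k j) ε := fun j => mem_ball_comm
        constructor
        · intro h
          rcases ({j | d k j ∈ ball x ε}).eq_empty_or_nonempty with hTe | hTne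
          · right
            have hm0 : m = 0 := by rw [← h, hTe, Nat.sInf_empty]
            rw [if_pos hm0]
            simp only [Set.mem_iInter, Set.mem_compl_iff]
            intro j hj
            have : j ∈ ({j | d k j ∈ ball x ε} : Set ℕ) := (hmem j).2 hj
            rw [hTe] at this
            exact this
          · left
            have h1 : m ∈ {j | d k j ∈ ball x ε} := h ▸ Nat.sInf_mem hTne
            refine ⟨(hmem m).1 h1, fun j hj hjx => ?_⟩
            have : j ∉ {j | d k j ∈ ball x ε} :=
              Nat.notMem_of_lt_sInf (h ▸ hj)
            exact this ((hmem j).2 hjx)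
        · rintro (⟨h1, h2⟩ | h)
          · have hm : m ∈ {j | d k j ∈ ball x ε} := (hmem m).2 h1
            refine le_antisymm (Nat.sInf_le hm) ?_
            by_contra hcon
            push_neg at hcon
            have hmem' := Nat.sInf_mem ⟨m, hm⟩
            exact h2 _ hcon ((hmem _).1 hmem')
          · by_cases hm0 : m = 0
            · rw [if_pos hm0] at h
              simp only [Set.mem_iInter, Set.mem_compl_iff] at h
              have hTe : {j | d k j ∈ ball x ε} = (∅ : Set ℕ) := by
                ext j
                simp only [Set.mem_setOf_eq, Set.mem_empty_iff_false, iff_false]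
                exact fun hj => h j ((hmem j).1 hj)
              rw [hTe, Nat.sInf_empty, hm0]
            · rw [if_neg hm0] at h
              exact absurd h (Set.notMem_empty x)
      rw [hCeq]
      refine MeasurableSet.union
        (measurableSet_ball.inter
          (MeasurableSet.iInter fun j => MeasurableSet.iInter fun _ =>
            measurableSet_ball.compl)) ?_
      split
      · exact MeasurableSet.iInter fun j => measurableSet_ball.compl
      · exact MeasurableSet.empty
    exact (measurable_of_countable fun p : ℤ × ℕ => d p.1 p.2).comp (hφ.prodMk hN)
  · -- the selection property
    intro x
    set k := φ x with hk
    have hfl1 : (k : ℝ) ≤ M x / (δ / 2) := Int.floor_le _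
    have hfl2 : M x / (δ / 2) < (k : ℝ) + 1 := Int.lt_floor_add_one _
    have hk1 : (k : ℝ) * (δ / 2) ≤ M x := by
      rw [← le_div_iff₀ hδ2]; exact hfl1
    have hk2 : M x < ((k : ℝ) + 1) * (δ / 2) := by
      rw [← div_lt_iff₀ hδ2]; exact hfl2
    have hlt : (k : ℝ) * (δ / 2) - δ / 2 < M x := by linarith
    obtain ⟨_, ⟨z, hzb, rfl⟩, hz⟩ := exists_lt_of_lt_csSup (hne x) hlt
    have hzU : z ∈ U k := hz
    obtain ⟨hdU, hdd⟩ := hd k ⟨z, hzU⟩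
    have hexm : ∃ m, d k m ∈ ball x ε := by
      obtain ⟨w, hw1, hw2⟩ := mem_closure_iff.1 (hdd hzU) (ball x ε) isOpen_ball hzb
      obtain ⟨m, rfl⟩ := hw2
      exact ⟨m, hw1⟩
    have hNmem : d k (N x) ∈ ball x ε := Nat.sInf_mem hexm
    refine ⟨hNmem, ?_⟩
    have hU : (k : ℝ) * (δ / 2) - δ / 2 < u (d k (N x)) := hdU (N x)
    have : ((k : ℝ) + 1) * (δ / 2) = (k : ℝ) * (δ / 2) + δ / 2 := by ring
    show sSup (u '' ball x ε) - δ ≤ u (d k (N x))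
    have hMx : sSup (u '' ball x ε) = M x := rfl
    rw [hMx]
    linarith

/-- Existence of Borel measurable almost-maximizing and almost-minimizing
selections in ε-balls. -/
theorem measurable_selection_sup_inf {n : ℕ} (hn : 0 < n)
    (Ω : Set (EuclideanSpace ℝ (Fin n)))
    (hΩo : IsOpen Ω) (hΩc : IsConnected Ω) (hΩb : Bornology.IsBounded Ω)
    (ε : ℝ) (hε : 0 < ε)
    (u : EuclideanSpace ℝ (Fin n) → ℝ) (hu : Measurable u)
    (C : ℝ) (hub : ∀ x, |u x| ≤ C) (δ : ℝ) (hδ : 0 < δ) :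
    (∃ Ssup : EuclideanSpace ℝ (Fin n) → EuclideanSpace ℝ (Fin n),
      Measurable Ssup ∧ ∀ x ∈ Ω, Ssup x ∈ ball x ε ∧
        sSup (u '' ball x ε) - δ ≤ u (Ssup x)) ∧
    (∃ Sinf : EuclideanSpace ℝ (Fin n) → EuclideanSpace ℝ (Fin n),
      Measurable Sinf ∧ ∀ x ∈ Ω, Sinf x ∈ ball x ε ∧
        u (Sinf x) ≤ sInf (u '' ball x ε) + δ) := by
  constructor
  · obtain ⟨S, hSm, hS⟩ := exists_sup_selection ε hε u hu C hub δ hδ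
    exact ⟨S, hSm, fun x _ => hS x⟩
  · obtain ⟨S, hSm, hS⟩ := exists_sup_selection ε hε (fun y => -u y) hu.neg C
      (fun x => by simpa using hub x) δ hδ
    refine ⟨S, hSm, fun x _ => ⟨(hS x).1, ?_⟩⟩
    have h2 := (hS x).2
    have hne : (u '' ball x ε).Nonempty :=
      ⟨u x, mem_image_of_mem _ (mem_ball_self hε)⟩
    have hbddneg : BddAbove ((fun y => -u y) '' ball x ε) :=
      ⟨C, by rintro _ ⟨z, _, rfl⟩; simpa using (abs_le.1 (by simpa using hub z)).2⟩
    have hkey : -sSup ((fun y => -u y) '' ball x ε) ≤ sInf (u '' ball x ε) := by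
      apply le_csInf hne
      rintro _ ⟨z, hz, rfl⟩
      have : -u z ≤ sSup ((fun y => -u y) '' ball x ε) :=
        le_csSup hbddneg ⟨z, hz, rfl⟩
      linarith
    linarith
end

section
/- There exists a bounded Borel function u : ℝ³ → ℝ such that the function x ↦ sup_{y ∈ closedBall(x,1)} u(y) is not Borel measurable. -/
/-!
Coding open subsets of a second countable space `Z` by points of Baire space `𝒩 = ℕ → ℕ` gives
an open set `U ⊆ 𝒩 × Z` whose sections are all open sets; with `Z = 𝒩 × 𝒩`, diagonalising the
complement of `U` yields a closed `E ⊆ 𝒩 × 𝒩` whose projection `D` is analytic but not Borel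
(otherwise `Dᶜ` would be the projection of a section of `Uᶜ`, coded by some `a` with `a ∈ D ↔ a ∉ D`).
Transported to `ℝ²` and wrapped onto the cylinder `x₂² + x₃² = 1` injectively and continuously,
`E` becomes a Borel set `S`. The closed unit ball about `(t, 0, 0)` meets the cylinder exactly in
the circle over `t`, so the supremum of `1_S` over that ball is `1_D'(t)` for the non-Borel
projection `D'` of the planar set.
-/

open MeasureTheory Metric Set TopologicalSpace

theorem exists_nat_isTopologicalBasis (Z : Type*) [TopologicalSpace Z] [SecondCountableTopology Z] :
    ∃ b : ℕ → Set Z, IsTopologicalBasis (range b) := by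
  obtain ⟨b, hb⟩ := ((countable_countableBasis Z).insert ∅).exists_eq_range (insert_nonempty _ _)
  exact ⟨b, hb ▸ (isBasis_countableBasis Z).insert_empty⟩

section UniversalOpen

variable {Z : Type*} [TopologicalSpace Z]

def universalOpen (b : ℕ → Set Z) : Set ((ℕ → ℕ) × Z) :=
  {p | ∃ n, p.1 n = 1 ∧ p.2 ∈ b n}

theorem isOpen_universalOpen {b : ℕ → Set Z} (hb : ∀ n, IsOpen (b n)) :
    IsOpen (universalOpen b) := by
  have : universalOpen b = ⋃ n, ((fun a : ℕ → ℕ => a n) ⁻¹' {1}) ×ˢ b n := by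
    ext p; simp [universalOpen]
  rw [this]
  exact isOpen_iUnion fun n => ((isOpen_discrete _).preimage (continuous_apply n)).prod (hb n)

theorem exists_preimage_mk_universalOpen_eq {b : ℕ → Set Z} (hb : IsTopologicalBasis (range b))
    {O : Set Z} (hO : IsOpen O) : ∃ a, Prod.mk a ⁻¹' universalOpen b = O := by
  classical
  refine ⟨fun n => if b n ⊆ O then 1 else 0, Subset.antisymm ?_ fun z hz => ?_⟩
  · rintro z ⟨n, hn, hz⟩
    by_cases h : b n ⊆ O
    · exact h hz
    · simp [h] at hn
  · obtain ⟨_, ⟨n, rfl⟩, hzn, hnO⟩ := hb.exists_subset_of_mem_open hz hO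
    exact ⟨n, if_pos hnO, hzn⟩

end UniversalOpen

theorem MeasureTheory.AnalyticSet.exists_isClosed_image_fst {X : Type*} [TopologicalSpace X]
    [T2Space X] {A : Set X} (hA : AnalyticSet A) :
    ∃ C : Set (X × (ℕ → ℕ)), IsClosed C ∧ Prod.fst '' C = A := by
  rw [AnalyticSet_def] at hA
  rcases hA with rfl | ⟨f, hf, rfl⟩
  · exact ⟨∅, isClosed_empty, image_empty _⟩
  · refine ⟨{p | f p.2 = p.1}, isClosed_eq (hf.comp continuous_snd) continuous_fst, ?_⟩
    ext x
    simp [eq_comm]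

theorem exists_isClosed_not_measurableSet_image_fst :
    ∃ E : Set ((ℕ → ℕ) × (ℕ → ℕ)), IsClosed E ∧ ¬ MeasurableSet (Prod.fst '' E) := by
  obtain ⟨b, hb⟩ := exists_nat_isTopologicalBasis ((ℕ → ℕ) × (ℕ → ℕ))
  have hU := isOpen_universalOpen fun n => hb.isOpen (mem_range_self n)
  set E := (fun q : (ℕ → ℕ) × (ℕ → ℕ) => (q.1, q)) ⁻¹' (universalOpen b)ᶜ
  refine ⟨E, hU.isClosed_compl.preimage (by fun_prop), fun hD => ?_⟩
  obtain ⟨C, hC, hCD⟩ := hD.compl.analyticSet.exists_isClosed_image_fst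
  obtain ⟨a, ha⟩ := exists_preimage_mk_universalOpen_eq hb hC.isOpen_compl
  have hself : a ∈ (Prod.fst '' E)ᶜ ↔ a ∈ Prod.fst '' E := by
    rw [← hCD, ← compl_compl C, ← ha]
    simp [E]
  exact not_iff_self hself

theorem exists_measurableSet_not_measurableSet_image_fst :
    ∃ P : Set (ℝ × ℝ), MeasurableSet P ∧ ¬ MeasurableSet (Prod.fst '' P) := by
  obtain ⟨E, hE, hEfst⟩ := exists_isClosed_not_measurableSet_image_fst
  obtain ⟨φ, hφ⟩ := exists_measurableEmbedding_real (ℕ → ℕ)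
  refine ⟨Prod.map φ φ '' E, (hφ.prodMap hφ).measurableSet_image.2 hE.measurableSet, ?_⟩
  rwa [image_image, show (fun q => (Prod.map φ φ q).1) = φ ∘ Prod.fst from rfl, image_comp,
    hφ.measurableSet_image]

theorem sSup_image_indicator_one_eq_indicator {α β : Type*} (s : Set α) (t : β → Set α) :
    (fun x => sSup (s.indicator (fun _ => (1 : ℝ)) '' t x)) =
      {x | (t x ∩ s).Nonempty}.indicator fun _ => 1 := by
  funext x
  by_cases h : (t x ∩ s).Nonempty
  · obtain ⟨y, hyt, hys⟩ := h
    rw [indicator_of_mem (show x ∈ {x | (t x ∩ s).Nonempty} from ⟨y, hyt, hys⟩)]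
    refine IsGreatest.csSup_eq ⟨⟨y, hyt, indicator_of_mem hys _⟩, ?_⟩
    rintro _ ⟨z, -, rfl⟩
    exact indicator_le_self' (fun _ _ => zero_le_one) z
  · have hzero : ∀ r ∈ s.indicator (fun _ => (1 : ℝ)) '' t x, r = 0 := by
      rintro _ ⟨y, hyt, rfl⟩
      exact indicator_of_notMem (fun hys => h ⟨y, hyt, hys⟩) _
    rw [indicator_of_notMem (show x ∉ {x | (t x ∩ s).Nonempty} from h)]
    exact le_antisymm (Real.sSup_nonpos fun r hr => (hzero r hr).le)
      (Real.sSup_nonneg fun r hr => (hzero r hr).ge)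

/-- Rational parametrisation of the unit circle (minus `(-1, 0)`) in the last two coordinates. -/
noncomputable def cylinderEmbedding (p : ℝ × ℝ) : EuclideanSpace ℝ (Fin 3) :=
  !₂[p.1, (1 - p.2 ^ 2) / (1 + p.2 ^ 2), 2 * p.2 / (1 + p.2 ^ 2)]

def axisPoint (t : ℝ) : EuclideanSpace ℝ (Fin 3) := !₂[t, 0, 0]

theorem continuous_axisPoint : Continuous axisPoint := by
  unfold axisPoint
  fun_prop

theorem cylinderEmbedding_one_sq_add_two_sq (p : ℝ × ℝ) :
    cylinderEmbedding p 1 ^ 2 + cylinderEmbedding p 2 ^ 2 = 1 := by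
  have : 1 + p.2 ^ 2 ≠ 0 := by positivity
  simp only [Fin.isValue, cylinderEmbedding, Matrix.cons_val_one, Matrix.cons_val_zero,
    Matrix.cons_val]
  field_simp
  ring

theorem cylinderEmbedding_two_div_one_add_one (p : ℝ × ℝ) :
    cylinderEmbedding p 2 / (1 + cylinderEmbedding p 1) = p.2 := by
  have : 1 + p.2 ^ 2 ≠ 0 := by positivity
  simp only [Fin.isValue, cylinderEmbedding, Matrix.cons_val, Matrix.cons_val_one,
    Matrix.cons_val_zero]
  field_simp
  ring

theorem continuous_cylinderEmbedding : Continuous cylinderEmbedding := by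
  unfold cylinderEmbedding
  fun_prop (disch := intro p; positivity)

theorem cylinderEmbedding_injective : Function.Injective cylinderEmbedding := by
  intro p q h
  refine Prod.ext (by simpa [cylinderEmbedding] using congrArg (· 0) h) ?_
  rw [← cylinderEmbedding_two_div_one_add_one p, ← cylinderEmbedding_two_div_one_add_one q, h]

theorem dist_axisPoint_sq (z : EuclideanSpace ℝ (Fin 3)) (t : ℝ) :
    dist z (axisPoint t) ^ 2 = (z 0 - t) ^ 2 + z 1 ^ 2 + z 2 ^ 2 := by
  rw [EuclideanSpace.dist_eq, Real.sq_sqrt (by positivity)]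
  simp [axisPoint, Fin.sum_univ_three, Real.dist_eq]

theorem cylinderEmbedding_mem_closedBall_axisPoint_iff (p : ℝ × ℝ) (t : ℝ) :
    cylinderEmbedding p ∈ closedBall (axisPoint t) 1 ↔ p.1 = t := by
  have hdist : dist (cylinderEmbedding p) (axisPoint t) ^ 2 = (p.1 - t) ^ 2 + 1 := by
    rw [dist_axisPoint_sq, add_assoc, cylinderEmbedding_one_sq_add_two_sq]
    simp [cylinderEmbedding]
  rw [mem_closedBall, ← sq_le_one_iff₀ dist_nonneg, hdist, sub_eq_zero.symm]
  constructor
  · intro h; nlinarith [sq_nonneg (p.1 - t)]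
  · intro h; rw [h]; norm_num

theorem preimage_axisPoint_closedBall_inter_nonempty (P : Set (ℝ × ℝ)) :
    axisPoint ⁻¹' {x | (closedBall x 1 ∩ cylinderEmbedding '' P).Nonempty} = Prod.fst '' P := by
  ext t
  constructor
  · rintro ⟨_, hball, p, hp, rfl⟩
    exact ⟨p, hp, (cylinderEmbedding_mem_closedBall_axisPoint_iff p t).1 hball⟩
  · rintro ⟨p, hp, rfl⟩
    exact ⟨_, (cylinderEmbedding_mem_closedBall_axisPoint_iff p _).2 rfl, p, hp, rfl⟩

/-- There is a bounded Borel function `u : ℝ³ → ℝ` such that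
`x ↦ sup_{closedBall(x,1)} u` is not Borel measurable. -/
theorem exists_borel_sup_closedBall_not_borel :
    ∃ u : EuclideanSpace ℝ (Fin 3) → ℝ,
      Measurable u ∧ (∃ C, ∀ x, |u x| ≤ C) ∧
      ¬ Measurable (fun x => sSup (u '' closedBall x 1)) := by
  obtain ⟨P, hP, hPfst⟩ := exists_measurableSet_not_measurableSet_image_fst
  have hS : MeasurableSet (cylinderEmbedding '' P) :=
    hP.image_of_continuousOn_injOn continuous_cylinderEmbedding.continuousOn
      cylinderEmbedding_injective.injOn
  refine ⟨(cylinderEmbedding '' P).indicator fun _ => 1, measurable_const.indicator hS,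
    ⟨1, fun x => ?_⟩, fun hsup => hPfst ?_⟩
  · by_cases hx : x ∈ cylinderEmbedding '' P <;> simp [hx]
  · rw [sSup_image_indicator_one_eq_indicator, measurable_indicator_const_iff] at hsup
    rw [← preimage_axisPoint_closedBall_inter_nonempty]
    exact continuous_axisPoint.measurable hsup
end
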